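/- With q*(w) defined by the greedy recursion along a viable ranking ρ, one has G q*(w) = w for every w ∈ ℝ₊^I, i.e. q*(w) ∈ Q^s(w). -/

import Mathlib

/-!
The ranked jobs are served greedily: the residual workload `w - ∑_{l<k} G_{·ρ(l)} q*_{ρ(l)}`
stays nonnegative, because job `ρ(k)` removes from each of its resources exactly the smallest
residual among them. After all ranked jobs, the residual at resource `i` is absorbed by the
unique single-resource job at `i` (local traffic condition, distinct columns), which gives the
row identity `∑_j G_{ij} q*_j = w_i` and nonnegativity of that job's queue.
-/

open Finset

lemma eq_of_apply_eq_one_of_sum_eq_one {ι : Type*} [Fintype ι] {f : ι → ℝ}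
    (hf : ∀ i, 0 ≤ f i) (hsum : ∑ i, f i = 1) {i i' : ι} (hi : f i = 1) (hi' : f i' = 1) :
    i = i' := by
  classical
  by_contra hne
  have hpair : ∑ x ∈ {i, i'}, f x ≤ ∑ x, f x := sum_le_univ_sum_of_nonneg hf
  rw [sum_pair hne, hi, hi', hsum] at hpair
  linarith

section ZeroOneMatrix

variable {ι κ : Type*} [Fintype ι] {K : Matrix ι κ ℝ}

lemma apply_eq_zero_of_sum_eq_one (hK01 : ∀ i j, K i j = 0 ∨ K i j = 1) {i i' : ι} {j : κ}
    (hj : ∑ i, K i j = 1) (hij : K i j = 1) (hi' : i' ≠ i) : K i' j = 0 :=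
  (hK01 i' j).resolve_right fun h' =>
    hi' (eq_of_apply_eq_one_of_sum_eq_one (fun i => by rcases hK01 i j with h | h <;> simp [h])
      hj h' hij)

lemma eq_of_sum_eq_one_of_apply_eq_one (hK01 : ∀ i j, K i j = 0 ∨ K i j = 1)
    (hKcols : ∀ j j' : κ, (∀ i, K i j = K i j') → j = j') {i : ι} {j j' : κ}
    (hj : ∑ i, K i j = 1) (hj' : ∑ i, K i j' = 1) (hij : K i j = 1) (hij' : K i j' = 1) :
    j = j' :=
  hKcols j j' fun i' => by
    by_cases h : i' = i
    · rw [h, hij, hij']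
    · rw [apply_eq_zero_of_sum_eq_one hK01 hj hij h, apply_eq_zero_of_sum_eq_one hK01 hj' hij' h]

end ZeroOneMatrix

section Greedy

variable {ι κ : Type*} {m : ℕ}

/-- The workload left at resource `i` once the first `n` ranked jobs `ρ 0, …, ρ (n-1)` have
been served. -/
def greedyResidual (G : Matrix ι κ ℝ) (ρ : Fin m → κ) (q : κ → ℝ) (w : ι → ℝ)
    (n : ℕ) (i : ι) : ℝ :=
  w i - ∑ l ∈ univ.filter (fun l : Fin m => (l : ℕ) < n), G i (ρ l) * q (ρ l)

variable (G : Matrix ι κ ℝ) (ρ : Fin m → κ) (q : κ → ℝ) (w : ι → ℝ)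

lemma greedyResidual_zero : greedyResidual G ρ q w 0 = w := by
  ext i
  simp [greedyResidual]

lemma greedyResidual_succ {n : ℕ} (h : n < m) (i : ι) :
    greedyResidual G ρ q w (n + 1) i =
      greedyResidual G ρ q w n i - G i (ρ ⟨n, h⟩) * q (ρ ⟨n, h⟩) := by
  have hinsert : univ.filter (fun l : Fin m => (l : ℕ) < n + 1) =
      insert ⟨n, h⟩ (univ.filter fun l : Fin m => (l : ℕ) < n) := by
    ext l
    simp only [mem_filter, mem_univ, true_and, mem_insert, Nat.lt_succ_iff_lt_or_eq, Fin.ext_iff]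
    tauto
  rw [greedyResidual, greedyResidual, hinsert, sum_insert (by simp)]
  ring

lemma greedyResidual_of_le {n : ℕ} (h : m ≤ n) (i : ι) :
    greedyResidual G ρ q w n i = w i - ∑ k, G i (ρ k) * q (ρ k) := by
  rw [greedyResidual, filter_true_of_mem fun l _ => l.isLt.trans_le h]

end Greedy

section SInf

variable {ι : Type*} {r : ι → ℝ}

lemma sInf_apply_nonneg (hr : ∀ i, 0 ≤ r i) (p : ι → Prop) :
    0 ≤ sInf {x | ∃ i, p i ∧ x = r i} :=
  Real.sInf_nonneg fun _ ⟨i, _, hx⟩ => hx ▸ hr i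

lemma sInf_apply_le (hr : ∀ i, 0 ≤ r i) {p : ι → Prop} {i : ι} (hi : p i) :
    sInf {x | ∃ i, p i ∧ x = r i} ≤ r i :=
  csInf_le ⟨0, fun _ ⟨i, _, hx⟩ => hx ▸ hr i⟩ ⟨i, hi, rfl⟩

lemma sub_mul_sInf_nonneg (hr : ∀ i, 0 ≤ r i) {c : ι → ℝ} (hc : ∀ i, c i = 0 ∨ c i = 1)
    (i : ι) : 0 ≤ r i - c i * sInf {x | ∃ i, c i = 1 ∧ x = r i} := by
  rcases hc i with h | h
  · simpa [h] using hr i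
  · simpa [h] using sInf_apply_le hr h

end SInf

section Network

variable {ι κ : Type*} {m : ℕ} {K G : Matrix ι κ ℝ} {μ : κ → ℝ} {ρ : Fin m → κ} {q : κ → ℝ}
  {w : ι → ℝ}

theorem greedyResidual_nonneg (hK01 : ∀ i j, K i j = 0 ∨ K i j = 1) (hμ : ∀ j, 0 < μ j)
    (hG : ∀ i j, G i j = K i j / μ j)
    (hq : ∀ k : Fin m, q (ρ k) =
      μ (ρ k) * sInf {x | ∃ i, K i (ρ k) = 1 ∧ x = greedyResidual G ρ q w k i})
    (hw : ∀ i, 0 ≤ w i) (n : ℕ) (i : ι) : 0 ≤ greedyResidual G ρ q w n i := by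
  induction n generalizing i with
  | zero => simpa [greedyResidual_zero] using hw i
  | succ n ih =>
    rcases lt_or_ge n m with h | h
    · have hserved : G i (ρ ⟨n, h⟩) * q (ρ ⟨n, h⟩) = K i (ρ ⟨n, h⟩) *
          sInf {x | ∃ i, K i (ρ ⟨n, h⟩) = 1 ∧ x = greedyResidual G ρ q w n i} := by
        rw [hq, hG]
        field_simp [(hμ (ρ ⟨n, h⟩)).ne']
      rw [greedyResidual_succ _ _ _ _ h, hserved]
      exact sub_mul_sInf_nonneg ih (fun i => hK01 i _) i
    · rw [greedyResidual_of_le _ _ _ _ (h.trans n.le_succ), ← greedyResidual_of_le _ _ _ _ h]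
      exact ih i

variable [Fintype ι] [Fintype κ]

theorem mulVec_eq_of_residual_absorbed (hK01 : ∀ i j, K i j = 0 ∨ K i j = 1)
    (hKcols : ∀ j j' : κ, (∀ i, K i j = K i j') → j = j')
    (hloc : ∀ i, ∃ j, ∑ i', K i' j = 1 ∧ K i j = 1) (hμ : ∀ j, 0 < μ j)
    (hG : ∀ i j, G i j = K i j / μ j) {Sp : Finset κ} (hSpS1 : ∀ j ∈ Sp, ∑ i, K i j ≠ 1)
    (hρinj : Function.Injective ρ) (hρS1 : ∀ k, ∑ i, K i (ρ k) ≠ 1) {ihat : κ → ι}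
    (hihat : ∀ j, ∑ i, K i j = 1 → K (ihat j) j = 1)
    (hpart : ∀ j, j ∈ Sp ∨ (∃ k, ρ k = j) ∨ ∑ i, K i j = 1) (hqP : ∀ j ∈ Sp, q j = 0)
    (hqS : ∀ j, j ∉ Sp → (∀ k, ρ k ≠ j) → ∑ i, K i j = 1 →
      q j = μ j * (w (ihat j) - ∑ k, G (ihat j) (ρ k) * q (ρ k))) :
    G.mulVec q = w := by
  classical
  ext i
  obtain ⟨j₀, hj₀, hij₀⟩ := hloc i
  have hj₀ρ : ∀ k, ρ k ≠ j₀ := fun k hk => hρS1 k (hk ▸ hj₀)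
  have hihat₀ : ihat j₀ = i := by
    by_contra h
    simpa [apply_eq_zero_of_sum_eq_one hK01 hj₀ hij₀ h] using hihat j₀ hj₀
  have hvanish : ∀ j ∈ univ, j ∉ insert j₀ (univ.image ρ) → G i j * q j = 0 := by
    intro j _ hj
    simp only [mem_insert, mem_image, mem_univ, true_and, not_or] at hj
    rcases hpart j with hjSp | hjρ | hjS1
    · rw [hqP j hjSp, mul_zero]
    · exact absurd hjρ hj.2
    · have hKij : K i j = 0 := (hK01 i j).resolve_right fun h =>
        hj.1 (eq_of_sum_eq_one_of_apply_eq_one hK01 hKcols hjS1 hj₀ h hij₀)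
      rw [hG, hKij, zero_div, zero_mul]
  have hj₀img : j₀ ∉ univ.image ρ := by simpa using hj₀ρ
  rw [Matrix.mulVec, dotProduct, ← sum_subset (subset_univ _) hvanish, sum_insert hj₀img,
    sum_image fun _ _ _ _ h => hρinj h, hqS j₀ (fun h => hSpS1 j₀ h hj₀) hj₀ρ hj₀, hihat₀, hG,
    hij₀]
  field_simp [(hμ j₀).ne']
  ring

end Network

theorem stmt_13_general (I J m : ℕ) (K : Matrix (Fin I) (Fin J) ℝ)
    (hK01 : ∀ i j, K i j = 0 ∨ K i j = 1)
    (hKcols : ∀ j j' : Fin J, (∀ i, K i j = K i j') → j = j')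
    (hloc : ∀ i : Fin I, ∃ j : Fin J, (∑ i', K i' j) = 1 ∧ K i j = 1)
    (μ : Fin J → ℝ) (hμ : ∀ j, 0 < μ j)
    (G : Matrix (Fin I) (Fin J) ℝ) (hG : ∀ i j, G i j = K i j / μ j)
    (Sp : Finset (Fin J))
    (hSpS1 : ∀ j ∈ Sp, (∑ i, K i j) ≠ 1)
    (ρ : Fin m → Fin J) (hρinj : Function.Injective ρ)
    (hρS1 : ∀ k : Fin m, (∑ i, K i (ρ k)) ≠ 1)
    (ihat : Fin J → Fin I)
    (hihat : ∀ j, (∑ i, K i j) = 1 → K (ihat j) j = 1)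
    (hpart : ∀ j : Fin J, j ∈ Sp ∨ (∃ k : Fin m, ρ k = j) ∨ (∑ i, K i j) = 1)
    (qs : (Fin I → ℝ) → Fin J → ℝ)
    (hqsP : ∀ w, ∀ j ∈ Sp, qs w j = 0)
    (hqsM : ∀ w : Fin I → ℝ, ∀ k : Fin m, qs w (ρ k) =
      μ (ρ k) * sInf {x : ℝ | ∃ i : Fin I, K i (ρ k) = 1 ∧
        x = w i - ∑ l ∈ Finset.univ.filter (fun l : Fin m => l < k),
              G i (ρ l) * qs w (ρ l)})
    (hqsS : ∀ w : Fin I → ℝ, ∀ j : Fin J, j ∉ Sp → (∀ k : Fin m, ρ k ≠ j) →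
      (∑ i, K i j) = 1 →
      qs w j = μ j * (w (ihat j) - ∑ k : Fin m, G (ihat j) (ρ k) * qs w (ρ k))) :
    ∀ w : Fin I → ℝ, (∀ i, 0 ≤ w i) →
      G.mulVec (qs w) = w ∧ (∀ j, 0 ≤ qs w j) ∧ (∀ j ∈ Sp, qs w j = 0) := by
  intro w hw
  -- `hqsM w` is the hypothesis on `greedyResidual`: `l < k` on `Fin m` unfolds to `↑l < ↑k`.
  have hres := greedyResidual_nonneg hK01 hμ hG (hqsM w) hw
  have hnonneg : ∀ j, 0 ≤ qs w j := by
    intro j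
    rcases hpart j with hjSp | ⟨k, rfl⟩ | hjS1
    · rw [hqsP w j hjSp]
    · rw [hqsM w k]
      exact mul_nonneg (hμ _).le (sInf_apply_nonneg (hres k) _)
    · have hjρ : ∀ k, ρ k ≠ j := fun k hk => hρS1 k (hk ▸ hjS1)
      rw [hqsS w j (fun h => hSpS1 j h hjS1) hjρ hjS1, ← greedyResidual_of_le _ _ _ _ le_rfl]
      exact mul_nonneg (hμ _).le (hres m _)
  exact ⟨mulVec_eq_of_residual_absorbed hK01 hKcols hloc hμ hG hSpS1 hρinj hρS1 hihat hpart
    (hqsP w) (hqsS w), hnonneg, hqsP w⟩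

/-- The greedy recursive selection `q*` produces a queue-length vector
consistent with the workload: `G q*(w) = w`, i.e. `q*(w) ∈ Q^s(w)`. -/
theorem stmt_13 (I J m : ℕ) (K : Matrix (Fin I) (Fin J) ℝ)
    (hK01 : ∀ i j, K i j = 0 ∨ K i j = 1)
    (hKcols : ∀ j j' : Fin J, (∀ i, K i j = K i j') → j = j')
    (hKnz : ∀ j, ∃ i, K i j = 1)
    (hloc : ∀ i : Fin I, ∃ j : Fin J, (∑ i', K i' j) = 1 ∧ K i j = 1)
    (μ : Fin J → ℝ) (hμ : ∀ j, 0 < μ j)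
    (G : Matrix (Fin I) (Fin J) ℝ) (hG : ∀ i j, G i j = K i j / μ j)
    (Sp : Finset (Fin J))
    (hSpS1 : ∀ j ∈ Sp, (∑ i, K i j) ≠ 1)
    (ρ : Fin m → Fin J) (hρinj : Function.Injective ρ)
    (hρSp : ∀ k : Fin m, ρ k ∉ Sp)
    (hρS1 : ∀ k : Fin m, (∑ i, K i (ρ k)) ≠ 1)
    (ihat : Fin J → Fin I)
    (hihat : ∀ j, (∑ i, K i j) = 1 → K (ihat j) j = 1)
    (hpart : ∀ j : Fin J, j ∈ Sp ∨ (∃ k : Fin m, ρ k = j) ∨ (∑ i, K i j) = 1)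
    (qs : (Fin I → ℝ) → Fin J → ℝ)
    (hqsP : ∀ w, ∀ j ∈ Sp, qs w j = 0)
    (hqsM : ∀ w : Fin I → ℝ, ∀ k : Fin m, qs w (ρ k) =
      μ (ρ k) * sInf {x : ℝ | ∃ i : Fin I, K i (ρ k) = 1 ∧
        x = w i - ∑ l ∈ Finset.univ.filter (fun l : Fin m => l < k),
              G i (ρ l) * qs w (ρ l)})
    (hqsS : ∀ w : Fin I → ℝ, ∀ j : Fin J, j ∉ Sp → (∀ k : Fin m, ρ k ≠ j) →
      (∑ i, K i j) = 1 →
      qs w j = μ j * (w (ihat j) - ∑ k : Fin m, G (ihat j) (ρ k) * qs w (ρ k))) :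
    ∀ w : Fin I → ℝ, (∀ i, 0 ≤ w i) →
      G.mulVec (qs w) = w ∧ (∀ j, 0 ≤ qs w j) ∧ (∀ j ∈ Sp, qs w j = 0) :=
  stmt_13_general I J m K hK01 hKcols hloc μ hμ G hG Sp hSpS1 ρ hρinj hρS1 ihat hihat hpart qs hqsP
    hqsM hqsS
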